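/- Let u, ρ : ℝ × ℝ → ℝ be sufficiently smooth and positive functions of (t,s) satisfying the system u_t = ρ²(u_ss − 2u_s²/u) + ρ ρ_s u_s and ρ_t = 2ρ³(u_ss/u − u_s²/u²) + 2ρ² ρ_s (u_s/u) at every point. Then at every point the two conservation-law identities hold: ∂t(1/ρ) = ∂s(−2ρ u_s/u) and ∂t(u/ρ) = ∂s(−ρ u_s). -/

import Mathlib

/-! Both laws are the quotient and product rules: once `u_t` and `ρ_t` are replaced using the
system, the two sides of each identity are the same rational expression in
`ρ, ρ_s, u, u_s, u_ss`. -/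

noncomputable section

/-- Partial derivative with respect to the first variable (time). -/
def pdT (f : ℝ × ℝ → ℝ) (t s : ℝ) : ℝ := deriv (fun r => f (r, s)) t

/-- Partial derivative with respect to the second variable (mass coordinate). -/
def pdS (f : ℝ × ℝ → ℝ) (t s : ℝ) : ℝ := deriv (fun w => f (t, w)) s

section PartialDerivatives

variable {f : ℝ × ℝ → ℝ}

theorem hasDerivAt_pdT {t s : ℝ} (hf : DifferentiableAt ℝ f (t, s)) :
    HasDerivAt (fun r => f (r, s)) (pdT f t s) t :=
  (hf.comp t (differentiableAt_id.prodMk (differentiableAt_const s))).hasDerivAt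

theorem hasDerivAt_pdS {t s : ℝ} (hf : DifferentiableAt ℝ f (t, s)) :
    HasDerivAt (fun w => f (t, w)) (pdS f t s) s :=
  (hf.comp s ((differentiableAt_const t).prodMk differentiableAt_id)).hasDerivAt

theorem hasDerivAt_pdS_pdS (hf : ContDiff ℝ 2 f) (t s : ℝ) :
    HasDerivAt (fun w => pdS f t w) (pdS (fun p => pdS f p.1 p.2) t s) s := by
  have hslice : ContDiff ℝ (1 + 1) (fun w => f (t, w)) :=
    hf.comp (contDiff_const.prodMk contDiff_id)
  exact (hslice.deriv'.differentiable one_ne_zero s).hasDerivAt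

end PartialDerivatives

section ConservationLaws

variable {u ρ : ℝ × ℝ → ℝ} {t s : ℝ}

theorem deriv_one_div_density_eq (hu : ContDiff ℝ 2 u) (hρ : DifferentiableAt ℝ ρ (t, s))
    (hu0 : u (t, s) ≠ 0) (hρ0 : ρ (t, s) ≠ 0)
    (heqρ : pdT ρ t s = 2 * ρ (t, s) ^ 3 *
          (pdS (fun p => pdS u p.1 p.2) t s / u (t, s) -
            (pdS u t s) ^ 2 / u (t, s) ^ 2) +
        2 * ρ (t, s) ^ 2 * pdS ρ t s * (pdS u t s / u (t, s))) :
    deriv (fun r => 1 / ρ (r, s)) t =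
      deriv (fun w => -2 * ρ (t, w) * pdS u t w / u (t, w)) s := by
  have hu1 := hu.differentiable two_ne_zero (t, s)
  have hlhs : HasDerivAt (fun r => 1 / ρ (r, s)) _ t :=
    (hasDerivAt_const t 1).div (hasDerivAt_pdT hρ) hρ0
  have hrhs : HasDerivAt (fun w => -2 * ρ (t, w) * pdS u t w / u (t, w)) _ s :=
    (((hasDerivAt_pdS hρ).const_mul (-2)).mul (hasDerivAt_pdS_pdS hu t s)).div
      (hasDerivAt_pdS hu1) hu0
  rw [hlhs.deriv, hrhs.deriv, Pi.mul_apply, heqρ]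
  field_simp
  ring

theorem deriv_div_density_eq (hu : ContDiff ℝ 2 u) (hρ : DifferentiableAt ℝ ρ (t, s))
    (hu0 : u (t, s) ≠ 0) (hρ0 : ρ (t, s) ≠ 0)
    (hequ : pdT u t s = ρ (t, s) ^ 2 *
          (pdS (fun p => pdS u p.1 p.2) t s - 2 * (pdS u t s) ^ 2 / u (t, s)) +
        ρ (t, s) * pdS ρ t s * pdS u t s)
    (heqρ : pdT ρ t s = 2 * ρ (t, s) ^ 3 *
          (pdS (fun p => pdS u p.1 p.2) t s / u (t, s) -
            (pdS u t s) ^ 2 / u (t, s) ^ 2) +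
        2 * ρ (t, s) ^ 2 * pdS ρ t s * (pdS u t s / u (t, s))) :
    deriv (fun r => u (r, s) / ρ (r, s)) t =
      deriv (fun w => -(ρ (t, w) * pdS u t w)) s := by
  have hu1 := hu.differentiable two_ne_zero (t, s)
  have hlhs : HasDerivAt (fun r => u (r, s) / ρ (r, s)) _ t :=
    (hasDerivAt_pdT hu1).div (hasDerivAt_pdT hρ) hρ0
  have hrhs : HasDerivAt (fun w => -(ρ (t, w) * pdS u t w)) _ s :=
    ((hasDerivAt_pdS hρ).mul (hasDerivAt_pdS_pdS hu t s)).neg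
  rw [hlhs.deriv, hrhs.deriv, hequ, heqρ]
  field_simp
  ring

end ConservationLaws

/-- the Lagrange-coordinate system for the linear heat equation
has the two conservation-law forms `(1/ρ)_t = (−2ρ u_s/u)_s` and
`(u/ρ)_t = (−ρ u_s)_s`. -/
theorem lagrange_system_conservation_laws
    (u ρ : ℝ × ℝ → ℝ)
    (hupos : ∀ p, 0 < u p) (hρpos : ∀ p, 0 < ρ p)
    (hu : ContDiff ℝ 2 u) (hρ : ContDiff ℝ 2 ρ)
    (hequ : ∀ t s : ℝ,
      pdT u t s = ρ (t, s) ^ 2 *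
          (pdS (fun p => pdS u p.1 p.2) t s - 2 * (pdS u t s) ^ 2 / u (t, s)) +
        ρ (t, s) * pdS ρ t s * pdS u t s)
    (heqρ : ∀ t s : ℝ,
      pdT ρ t s = 2 * ρ (t, s) ^ 3 *
          (pdS (fun p => pdS u p.1 p.2) t s / u (t, s) -
            (pdS u t s) ^ 2 / u (t, s) ^ 2) +
        2 * ρ (t, s) ^ 2 * pdS ρ t s * (pdS u t s / u (t, s))) :
    ∀ t s : ℝ,
      deriv (fun r => 1 / ρ (r, s)) t =
        deriv (fun w => -2 * ρ (t, w) * pdS u t w / u (t, w)) s ∧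
      deriv (fun r => u (r, s) / ρ (r, s)) t =
        deriv (fun w => -(ρ (t, w) * pdS u t w)) s := by
  intro t s
  have hρ1 := hρ.differentiable two_ne_zero (t, s)
  exact ⟨deriv_one_div_density_eq hu hρ1 (hupos _).ne' (hρpos _).ne' (heqρ t s),
    deriv_div_density_eq hu hρ1 (hupos _).ne' (hρpos _).ne' (hequ t s) (heqρ t s)⟩
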